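/- Let T be the Bolyai–Rényi map and L₀ its transfer operator at parameter t = 0. There exists a continuous function h : [0,1] → ℝ with h ≥ 0, ∫₀¹ h(x) dx = 1, and L₀h = h, such that the measure μ with dμ = h dx is a T-invariant Borel probability measure on [0,1) absolutely continuous with respect to Lebesgue measure. -/

import Mathlib

open MeasureTheory Real Filter

/-- The Bolyai–Rényi map. -/
noncomputable def T (x : ℝ) : ℝ :=
  if x < Real.sqrt 2 - 1 then x ^ 2 + 2 * x
  else if x < Real.sqrt 3 - 1 then x ^ 2 + 2 * x - 1
  else x ^ 2 + 2 * x - 2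

/-- The transfer operator of the Bolyai–Rényi map at parameter `t`. -/
noncomputable def Lt (t : ℝ) (f : ℝ → ℝ) : ℝ → ℝ := fun x =>
  ∑ i ∈ Finset.Icc (1 : ℕ) 3,
    (2 * Real.sqrt ((i : ℝ) + x)) ^ (-(1 + t)) * f (Real.sqrt ((i : ℝ) + x) - 1)

/-!
On `[0, 1)` the map `T` has the three full branches `x ↦ (1 + x)² - i`, `i = 1, 2, 3`, with
inverse branches `y ↦ √(i + y) - 1`. The change of variables formula along these branches shows
that `L₀` is dual to composition with `T`: `∫_{T⁻¹A ∩ [0,1)} f = ∫_{A ∩ [0,1)} L₀ f` for `f ≥ 0`.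
So a density `h` is `T`-invariant as soon as `L₀ h = h`, and `L₀` preserves `∫₀¹`.

To find a fixed point, `L₀` is viewed as a bounded operator on `C([0,1])`. It maps the set of
nonnegative, `6`-Lipschitz functions of integral `1` into itself; by Arzelà–Ascoli this set is
compact, and it is convex, so a limit point of the Cesàro averages `(1/n) ∑_{k<n} L₀ᵏ 1` is fixed.
-/

open Set Function Topology
open scoped NNReal ENNReal

theorem ContinuousLinearMap.exists_mem_fixedPt_of_mapsTo {E : Type*} [NormedAddCommGroup E]
    [NormedSpace ℝ E] (f : E →L[ℝ] E) {K : Set E} (hK : IsCompact K) (hKc : Convex ℝ K)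
    {x : E} (hx : x ∈ K) (hfK : MapsTo f K K) : ∃ y ∈ K, f y = y := by
  set A : ℕ → E := fun n => birkhoffAverage ℝ f id (n + 1) x
  have horbit : range (fun k => id (f^[k] x)) ⊆ K := range_subset_iff.2 fun k => hfK.iterate k hx
  have hA (n : ℕ) : A n ∈ K := by
    rw [show A n = ∑ k ∈ Finset.range (n + 1), ((n + 1 : ℕ) : ℝ)⁻¹ • f^[k] x by
      simp [A, birkhoffAverage, birkhoffSum, Finset.smul_sum]]
    exact hKc.sum_mem (fun _ _ => by positivity)
      (by simp [mul_inv_cancel₀ (Nat.cast_add_one_ne_zero (R := ℝ) n)])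
      fun k _ => horbit ⟨k, rfl⟩
  have hfA (n : ℕ) : f (A n) = birkhoffAverage ℝ f id (n + 1) (f x) := by
    simp [A, birkhoffAverage, birkhoffSum, ← iterate_succ_apply' f]
  have hfA_sub : Tendsto (fun n => f (A n) - A n) atTop (𝓝 0) := by
    simp only [hfA]
    exact (tendsto_birkhoffAverage_apply_sub_birkhoffAverage ℝ (hK.isBounded.subset horbit)).comp
      (tendsto_add_atTop_nat 1)
  obtain ⟨y, hy, φ, hφ, hlim⟩ := hK.tendsto_subseq hA
  refine ⟨y, hy, tendsto_nhds_unique ((f.continuous.tendsto y).comp hlim) ?_⟩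
  simpa [comp_def] using (hfA_sub.comp hφ.tendsto_atTop).add hlim

lemma convex_setOf_lipschitzWith {α E : Type*} [PseudoEMetricSpace α] [NormedAddCommGroup E]
    [NormedSpace ℝ E] (K : ℝ≥0) : Convex ℝ {f : α → E | LipschitzWith K f} := by
  intro f hf g hg a b ha hb hab
  have hK : ‖a‖₊ * K + ‖b‖₊ * K = K := by
    rw [← add_mul, ← NNReal.coe_inj]
    push_cast
    rw [Real.norm_of_nonneg ha, Real.norm_of_nonneg hb, hab, one_mul]
  exact hK ▸ ((lipschitzWith_smul a).comp hf).add ((lipschitzWith_smul b).comp hg)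

noncomputable def invBranch (i y : ℝ) : ℝ := √(i + y) - 1

noncomputable def invBranchDeriv (i y : ℝ) : ℝ := (2 * √(i + y))⁻¹

def branchInterval (i : ℝ) : Set ℝ := Ico (√i - 1) (√(i + 1) - 1)

lemma Lt_zero_apply (f : ℝ → ℝ) (x : ℝ) :
    Lt 0 f x = ∑ i ∈ Finset.Icc (1 : ℕ) 3, invBranchDeriv i x * f (invBranch i x) := by
  simp only [Lt, add_zero, Real.rpow_neg_one, invBranchDeriv, invBranch]

lemma Lt_nonneg (t : ℝ) {f : ℝ → ℝ} (hf : ∀ z, 0 ≤ f z) (x : ℝ) : 0 ≤ Lt t f x :=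
  Finset.sum_nonneg fun _ _ => mul_nonneg (Real.rpow_nonneg (by positivity) _) (hf _)

lemma Lt_add (t : ℝ) (f g : ℝ → ℝ) : Lt t (f + g) = Lt t f + Lt t g := by
  ext x; simp [Lt, mul_add, Finset.sum_add_distrib]

lemma Lt_smul (t c : ℝ) (f : ℝ → ℝ) : Lt t (c • f) = c • Lt t f := by
  ext x; simp [Lt, Finset.mul_sum, mul_left_comm]

section InverseBranch

variable {i x y : ℝ}

lemma continuous_invBranch : Continuous (invBranch i) := by
  unfold invBranch; fun_prop

lemma measurable_invBranchDeriv : Measurable (invBranchDeriv i) := by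
  unfold invBranchDeriv; fun_prop

lemma continuousOn_invBranchDeriv : ContinuousOn (invBranchDeriv i) (Ioi (-i)) := by
  unfold invBranchDeriv
  refine (continuous_const.mul (by fun_prop)).continuousOn.inv₀ fun y hy => ?_
  exact mul_ne_zero two_ne_zero (Real.sqrt_pos.2 (neg_lt_iff_pos_add'.1 hy)).ne'

lemma hasDerivAt_invBranch (h : 0 < i + y) : HasDerivAt (invBranch i) (invBranchDeriv i y) y := by
  have := ((Real.hasDerivAt_sqrt h.ne').comp y ((hasDerivAt_id y).const_add i)).sub_const 1
  rwa [mul_one, one_div] at this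

lemma injOn_invBranch : InjOn (invBranch i) (Ici (-i)) := fun x hx y hy hxy => by
  have := Real.sqrt_inj (neg_le_iff_add_nonneg'.1 hx) (neg_le_iff_add_nonneg'.1 hy) |>.1
    (sub_left_inj.1 hxy)
  linarith

lemma image_invBranch_Ico (hi : 0 ≤ i) : invBranch i '' Ico 0 1 = branchInterval i := by
  ext x
  constructor
  · rintro ⟨y, ⟨hy0, hy1⟩, rfl⟩
    exact ⟨by unfold invBranch; gcongr; linarith, by unfold invBranch; gcongr⟩
  · rintro ⟨hx0, hx1⟩
    have hx : 0 ≤ 1 + x := by linarith [Real.sqrt_nonneg i]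
    refine ⟨(1 + x) ^ 2 - i, ⟨?_, ?_⟩, ?_⟩
    · linarith [(Real.sqrt_le_left hx).1 (by linarith : √i ≤ 1 + x)]
    · linarith [(Real.lt_sqrt hx).1 (by linarith : 1 + x < √(i + 1))]
    · simp [invBranch, Real.sqrt_sq hx]

lemma invBranch_mem_branchInterval (hi : 0 ≤ i) (hy : y ∈ Ico 0 1) :
    invBranch i y ∈ branchInterval i :=
  image_invBranch_Ico hi ▸ mem_image_of_mem _ hy

lemma invBranchDeriv_nonneg (i y : ℝ) : 0 ≤ invBranchDeriv i y := by
  unfold invBranchDeriv; positivity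

lemma invBranchDeriv_pos (h : 0 < i + y) : 0 < invBranchDeriv i y := by
  unfold invBranchDeriv; positivity

lemma invBranchDeriv_le (hi : 0 < i) (hy : 0 ≤ y) : invBranchDeriv i y ≤ (2 * √i)⁻¹ := by
  unfold invBranchDeriv
  gcongr
  linarith

lemma invBranchDeriv_le_half (hi : 1 ≤ i) (hy : 0 ≤ y) : invBranchDeriv i y ≤ 2⁻¹ := by
  unfold invBranchDeriv
  gcongr
  linarith [Real.one_le_sqrt.2 (by linarith : 1 ≤ i + y)]

lemma abs_invBranch_sub_le (hi : 0 < i) (hx : 0 ≤ x) (hy : 0 ≤ y) :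
    |invBranch i x - invBranch i y| ≤ (2 * √i)⁻¹ * |x - y| := by
  have hsx : √i ≤ √(i + x) := Real.sqrt_le_sqrt (by linarith)
  have hsy : √i ≤ √(i + y) := Real.sqrt_le_sqrt (by linarith)
  have hsi : 0 < √i := Real.sqrt_pos.2 hi
  have key : (√(i + x) - √(i + y)) * (√(i + x) + √(i + y)) = x - y := by
    linear_combination
      Real.sq_sqrt (by linarith : 0 ≤ i + x) - Real.sq_sqrt (by linarith : 0 ≤ i + y)
  rw [invBranch, invBranch, sub_sub_sub_cancel_right, inv_mul_eq_div, le_div_iff₀ (by positivity),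
    ← key, abs_mul, abs_of_pos (by positivity : 0 < √(i + x) + √(i + y))]
  gcongr
  linarith

lemma abs_invBranchDeriv_sub_le (hi : 1 ≤ i) (hx : 0 ≤ x) (hy : 0 ≤ y) :
    |invBranchDeriv i x - invBranchDeriv i y| ≤ (4 * i)⁻¹ * |x - y| := by
  have hsi : 1 ≤ √i := Real.one_le_sqrt.2 hi
  have hsx : √i ≤ √(i + x) := Real.sqrt_le_sqrt (by linarith)
  have hsy : √i ≤ √(i + y) := Real.sqrt_le_sqrt (by linarith)
  have hprod : i ≤ √(i + x) * √(i + y) := by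
    calc i = √i * √i := (Real.mul_self_sqrt (by linarith)).symm
      _ ≤ √(i + x) * √(i + y) := by gcongr
  have hd := abs_invBranch_sub_le (by linarith : 0 < i) hx hy
  simp only [invBranch, sub_sub_sub_cancel_right] at hd
  rw [invBranchDeriv, invBranchDeriv, inv_sub_inv (by positivity) (by positivity), abs_div,
    abs_of_pos (show 0 < 2 * √(i + x) * (2 * √(i + y)) by positivity), div_le_iff₀ (by positivity)]
  calc |2 * √(i + y) - 2 * √(i + x)| = 2 * |√(i + x) - √(i + y)| := by
        rw [← mul_sub, abs_mul, abs_sub_comm, abs_two]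
    _ ≤ 2 * ((2 * √i)⁻¹ * |x - y|) := by gcongr
    _ = |x - y| / √i := by field_simp
    _ ≤ |x - y| := div_le_self (abs_nonneg _) hsi
    _ ≤ |x - y| * ((√(i + x) * √(i + y)) / i) :=
        le_mul_of_one_le_right (abs_nonneg _) ((one_le_div (by linarith)).2 hprod)
    _ = (4 * i)⁻¹ * |x - y| * (2 * √(i + x) * (2 * √(i + y))) := by
        field_simp; ring

lemma abs_branchTerm_sub_le {f : ℝ → ℝ} {L : ℝ≥0} {M : ℝ} (hf : LipschitzWith L f)
    (hfM : ∀ z, |f z| ≤ M) (hi : 1 ≤ i) (hx : 0 ≤ x) (hy : 0 ≤ y) :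
    |invBranchDeriv i x * f (invBranch i x) - invBranchDeriv i y * f (invBranch i y)|
      ≤ (L + M) / (4 * i) * |x - y| := by
  have hsi : 0 < √i := Real.sqrt_pos.2 (by linarith)
  have hw := invBranchDeriv_pos (i := i) (y := x) (by linarith)
  have hf' : |f (invBranch i x) - f (invBranch i y)| ≤ L * ((2 * √i)⁻¹ * |x - y|) := by
    simpa only [Real.dist_eq] using (hf.dist_le_mul _ _).trans
      (by gcongr; simpa only [Real.dist_eq] using abs_invBranch_sub_le (by linarith) hx hy)
  calc _ = |invBranchDeriv i x * (f (invBranch i x) - f (invBranch i y))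
          + (invBranchDeriv i x - invBranchDeriv i y) * f (invBranch i y)| := by ring_nf
    _ ≤ invBranchDeriv i x * |f (invBranch i x) - f (invBranch i y)|
          + |invBranchDeriv i x - invBranchDeriv i y| * |f (invBranch i y)| := by
        rw [← abs_of_pos hw, ← abs_mul, ← abs_mul, abs_of_pos hw]; exact abs_add_le _ _
    _ ≤ (2 * √i)⁻¹ * (L * ((2 * √i)⁻¹ * |x - y|)) + (4 * i)⁻¹ * |x - y| * M := by
        gcongr
        · exact invBranchDeriv_le (by linarith) hx
        · exact abs_invBranchDeriv_sub_le hi hx hy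
        · exact hfM _
    _ = (L + M) / (4 * i) * |x - y| := by
        field_simp
        rw [Real.sq_sqrt (by linarith)]
        ring

end InverseBranch

lemma abs_Lt_zero_le {f : ℝ → ℝ} {M : ℝ} (hf : ∀ z, |f z| ≤ M) {x : ℝ} (hx : 0 ≤ x) :
    |Lt 0 f x| ≤ 3 / 2 * M := by
  rw [Lt_zero_apply]
  calc _ ≤ ∑ i ∈ Finset.Icc (1 : ℕ) 3, 2⁻¹ * M := (Finset.abs_sum_le_sum_abs _ _).trans <|
        Finset.sum_le_sum fun i hi => by
          rw [abs_mul, abs_of_nonneg (invBranchDeriv_nonneg _ _)]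
          exact mul_le_mul (invBranchDeriv_le_half
            (Nat.one_le_cast.2 (Finset.mem_Icc.1 hi).1) hx) (hf _) (abs_nonneg _) (by norm_num)
    _ = 3 / 2 * M := by rw [Finset.sum_const, Nat.card_Icc, nsmul_eq_mul]; norm_num; ring

-- Each branch contributes `(6 + 7) / (4 i)` and `13 / 4 * (1 + 1/2 + 1/3) = 143 / 24 ≤ 6`.
lemma lipschitzOnWith_Lt_zero {f : ℝ → ℝ} (hf : LipschitzWith 6 f) (hf7 : ∀ z, |f z| ≤ 7) :
    LipschitzOnWith 6 (Lt 0 f) (Ici 0) := by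
  refine LipschitzOnWith.of_dist_le_mul fun x hx y hy => ?_
  rw [Real.dist_eq, Real.dist_eq, Lt_zero_apply, Lt_zero_apply, ← Finset.sum_sub_distrib]
  calc _ ≤ ∑ i ∈ Finset.Icc (1 : ℕ) 3, (6 + 7) / (4 * (i : ℝ)) * |x - y| :=
        (Finset.abs_sum_le_sum_abs _ _).trans <| Finset.sum_le_sum fun i hi =>
          abs_branchTerm_sub_le hf hf7 (by exact_mod_cast (Finset.mem_Icc.1 hi).1) hx hy
    _ ≤ 6 * |x - y| := by
        rw [← Finset.sum_mul]
        gcongr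
        norm_num [Finset.sum_Icc_succ_top]

lemma continuousOn_Lt_zero {f : ℝ → ℝ} (hf : Continuous f) : ContinuousOn (Lt 0 f) (Ici 0) := by
  rw [show Lt 0 f = _ from funext (Lt_zero_apply f)]
  refine continuousOn_finsetSum _ fun i hi => ContinuousOn.mul ?_
    (hf.comp continuous_invBranch).continuousOn
  refine continuousOn_invBranchDeriv.mono fun y (hy : 0 ≤ y) => show -(i : ℝ) < y from ?_
  linarith [(Nat.one_le_cast.2 (Finset.mem_Icc.1 hi).1 : (1 : ℝ) ≤ i)]

lemma pairwise_disjoint_branchInterval :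
    Pairwise (Disjoint on fun i : ℕ => branchInterval i) := by
  simpa [branchInterval, Order.succ_eq_add_one] using
    Monotone.pairwise_disjoint_on_Ico_succ (f := fun i : ℕ => √i - 1)
      fun m n h => by dsimp only; gcongr

lemma branchInterval_subset_Ico {i : ℕ} (hi : i ∈ Finset.Icc 1 3) :
    branchInterval i ⊆ Ico 0 1 := by
  obtain ⟨h1, h3⟩ := Finset.mem_Icc.1 hi
  refine Ico_subset_Ico ?_ ?_
  · linarith [Real.one_le_sqrt.2 (Nat.one_le_cast.2 h1 : (1 : ℝ) ≤ i)]
  · have : (i : ℝ) ≤ 3 := by exact_mod_cast h3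
    linarith [(Real.sqrt_le_left zero_le_two).2 (by linarith : (i : ℝ) + 1 ≤ 2 ^ 2)]

lemma exists_mem_branchInterval {x : ℝ} (hx : x ∈ Ico 0 1) :
    ∃ i ∈ Finset.Icc (1 : ℕ) 3, x ∈ branchInterval i := by
  have hx0 : 0 ≤ 1 + x := by linarith [hx.1]
  refine ⟨⌊(1 + x) ^ 2⌋₊, Finset.mem_Icc.2 ⟨Nat.le_floor ?_, Nat.le_of_lt_succ ?_⟩, ?_, ?_⟩
  · push_cast; nlinarith [hx.1]
  · exact (Nat.floor_lt (by positivity)).2 (by push_cast; nlinarith [hx.1, hx.2])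
  · linarith [(Real.sqrt_le_left hx0).2 (Nat.floor_le (by positivity))]
  · linarith [(Real.lt_sqrt hx0).2 (Nat.lt_floor_add_one ((1 + x) ^ 2))]

lemma T_eq_of_mem_branchInterval {i : ℕ} (hi : i ∈ Finset.Icc 1 3) {x : ℝ}
    (hx : x ∈ branchInterval i) : T x = (1 + x) ^ 2 - i := by
  have h23 : √2 ≤ √3 := Real.sqrt_le_sqrt (by norm_num)
  obtain ⟨h1, h3⟩ := Finset.mem_Icc.1 hi
  interval_cases i <;> norm_num [branchInterval] at hx ⊢
  · rw [T, if_pos (by linarith)]; ring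
  · rw [T, if_neg (not_lt.2 (by linarith)), if_pos (by linarith)]; ring
  · rw [T, if_neg (not_lt.2 (by linarith)), if_neg (not_lt.2 (by linarith))]; ring

lemma T_invBranch {i : ℕ} (hi : i ∈ Finset.Icc 1 3) {y : ℝ} (hy : y ∈ Ico 0 1) :
    T (invBranch i y) = y := by
  rw [T_eq_of_mem_branchInterval hi (invBranch_mem_branchInterval (Nat.cast_nonneg i) hy),
    invBranch, add_sub_cancel, Real.sq_sqrt (by linarith [hy.1, Nat.cast_nonneg (α := ℝ) i])]
  ring

lemma preimage_T_inter_Ico (A : Set ℝ) :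
    T ⁻¹' A ∩ Ico 0 1 = ⋃ i ∈ Finset.Icc (1 : ℕ) 3, invBranch i '' (A ∩ Ico 0 1) := by
  ext x
  simp only [mem_inter_iff, mem_preimage, mem_iUnion, mem_image, exists_prop]
  constructor
  · rintro ⟨hxA, hx⟩
    obtain ⟨i, hi, hxi⟩ := exists_mem_branchInterval hx
    rw [← image_invBranch_Ico (Nat.cast_nonneg i)] at hxi
    obtain ⟨y, hy, rfl⟩ := hxi
    exact ⟨i, hi, y, ⟨T_invBranch hi hy ▸ hxA, hy⟩, rfl⟩
  · rintro ⟨i, hi, y, ⟨hyA, hy⟩, rfl⟩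
    exact ⟨(T_invBranch hi hy).symm ▸ hyA,
      branchInterval_subset_Ico hi (invBranch_mem_branchInterval (Nat.cast_nonneg i) hy)⟩

lemma measurable_T : Measurable T :=
  Measurable.ite measurableSet_Iio (by fun_prop)
    (Measurable.ite measurableSet_Iio (by fun_prop) (by fun_prop))

lemma lintegral_image_invBranch {i : ℝ} {s : Set ℝ} (hs : MeasurableSet s) (hsi : s ⊆ Ioi (-i))
    (g : ℝ → ℝ≥0∞) :
    ∫⁻ x in invBranch i '' s, g x
      = ∫⁻ y in s, ENNReal.ofReal (invBranchDeriv i y) * g (invBranch i y) := by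
  have hpos : ∀ y ∈ s, 0 < i + y := fun y hy => neg_lt_iff_pos_add'.1 (hsi hy)
  rw [lintegral_image_eq_lintegral_abs_deriv_mul hs
    (fun y hy => (hasDerivAt_invBranch (hpos y hy)).hasDerivWithinAt)
    (injOn_invBranch.mono (hsi.trans Ioi_subset_Ici_self)) g]
  exact setLIntegral_congr_fun hs fun y hy => by rw [abs_of_pos (invBranchDeriv_pos (hpos y hy))]

theorem setLIntegral_preimage_T_inter_Ico {A : Set ℝ} (hA : MeasurableSet A) {g : ℝ → ℝ≥0∞}
    (hg : Measurable g) :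
    ∫⁻ x in T ⁻¹' A ∩ Ico 0 1, g x = ∫⁻ y in A ∩ Ico 0 1,
      ∑ i ∈ Finset.Icc (1 : ℕ) 3, ENNReal.ofReal (invBranchDeriv i y) * g (invBranch i y) := by
  have hs : MeasurableSet (A ∩ Ico 0 1) := hA.inter measurableSet_Ico
  have hsi (i : ℕ) (hi : i ∈ Finset.Icc 1 3) : A ∩ Ico 0 1 ⊆ Ioi (-(i : ℝ)) :=
    fun y ⟨_, hy0, _⟩ => show -(i : ℝ) < y by
      linarith [(Nat.one_le_cast.2 (Finset.mem_Icc.1 hi).1 : (1 : ℝ) ≤ i)]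
  have himage (i : ℕ) : invBranch i '' (A ∩ Ico 0 1) ⊆ branchInterval i :=
    image_invBranch_Ico (Nat.cast_nonneg i) ▸ image_mono inter_subset_right
  have hmeas (i : ℕ) :
      Measurable fun y => ENNReal.ofReal (invBranchDeriv i y) * g (invBranch i y) :=
    measurable_invBranchDeriv.ennreal_ofReal.mul (hg.comp continuous_invBranch.measurable)
  rw [preimage_T_inter_Ico, lintegral_finsetSum _ fun i _ => hmeas i,
    lintegral_biUnion_finset
      (fun i _ j _ hij => (pairwise_disjoint_branchInterval hij).mono (himage i) (himage j))
      (fun i hi => hs.image_of_continuousOn_injOn continuous_invBranch.continuousOn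
        (injOn_invBranch.mono ((hsi i hi).trans Ioi_subset_Ici_self)))]
  exact Finset.sum_congr rfl fun i hi => lintegral_image_invBranch hs (hsi i hi) g

theorem setLIntegral_preimage_T_inter_Ico_eq_Lt_zero {A : Set ℝ} (hA : MeasurableSet A)
    {f : ℝ → ℝ} (hf : Measurable f) (hf0 : ∀ z, 0 ≤ f z) :
    ∫⁻ x in T ⁻¹' A ∩ Ico 0 1, ENNReal.ofReal (f x)
      = ∫⁻ y in A ∩ Ico 0 1, ENNReal.ofReal (Lt 0 f y) := by
  rw [setLIntegral_preimage_T_inter_Ico hA hf.ennreal_ofReal]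
  congr with y
  rw [Lt_zero_apply, ENNReal.ofReal_sum_of_nonneg fun i _ =>
    mul_nonneg (invBranchDeriv_nonneg _ _) (hf0 _)]
  simp only [ENNReal.ofReal_mul (invBranchDeriv_nonneg _ _)]

lemma ofReal_intervalIntegral_zero_one {f : ℝ → ℝ} (hf : IntegrableOn f (Icc 0 1))
    (hf0 : ∀ z, 0 ≤ f z) :
    ENNReal.ofReal (∫ x in (0 : ℝ)..1, f x) = ∫⁻ x in Ico 0 1, ENNReal.ofReal (f x) := by
  rw [intervalIntegral.integral_of_le zero_le_one, ← setIntegral_congr_set Ico_ae_eq_Ioc,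
    ofReal_integral_eq_lintegral_ofReal (hf.mono_set Ico_subset_Icc_self) (ae_of_all _ hf0)]

theorem intervalIntegral_Lt_zero {f : ℝ → ℝ} (hf : Continuous f) (hf0 : ∀ z, 0 ≤ f z) :
    ∫ x in (0 : ℝ)..1, Lt 0 f x = ∫ x in (0 : ℝ)..1, f x := by
  have h := setLIntegral_preimage_T_inter_Ico_eq_Lt_zero MeasurableSet.univ hf.measurable hf0
  rw [preimage_univ, univ_inter] at h
  rw [← ENNReal.ofReal_eq_ofReal_iff (intervalIntegral.integral_nonneg zero_le_one fun x _ =>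
      Lt_nonneg 0 hf0 x) (intervalIntegral.integral_nonneg zero_le_one fun x _ => hf0 x),
    ofReal_intervalIntegral_zero_one ((continuousOn_Lt_zero hf).mono Icc_subset_Ici_self
      |>.integrableOn_compact isCompact_Icc) (Lt_nonneg 0 hf0),
    ofReal_intervalIntegral_zero_one hf.integrableOn_Icc hf0, h]

section FunctionSpace

open BoundedContinuousFunction

noncomputable def transferCLM : (Icc (0 : ℝ) 1 →ᵇ ℝ) →L[ℝ] (Icc (0 : ℝ) 1 →ᵇ ℝ) :=
  LinearMap.mkContinuous
    { toFun := fun F => mkOfCompact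
        ⟨fun x => Lt 0 (IccExtend zero_le_one F) x,
          ((continuousOn_Lt_zero F.continuous.Icc_extend').mono Icc_subset_Ici_self).domRestrict⟩
      map_add' := fun F G => by
        ext x; exact congrFun (Lt_add 0 (IccExtend zero_le_one F) (IccExtend zero_le_one G)) x
      map_smul' := fun c F => by
        ext x; exact congrFun (Lt_smul 0 c (IccExtend zero_le_one F)) x }
    (3 / 2) fun F => (norm_le (by positivity)).2 fun x =>
      abs_Lt_zero_le (fun _ => norm_coe_le_norm F _) x.2.1

lemma transferCLM_apply (F : Icc (0 : ℝ) 1 →ᵇ ℝ) (x : Icc (0 : ℝ) 1) :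
    transferCLM F x = Lt 0 (IccExtend zero_le_one F) x := rfl

def densitySet : Set (Icc (0 : ℝ) 1 →ᵇ ℝ) :=
  {F | (∀ x, 0 ≤ F x) ∧ LipschitzWith 6 F ∧ ∫ x in (0 : ℝ)..1, IccExtend zero_le_one F x = 1}

variable {F : Icc (0 : ℝ) 1 →ᵇ ℝ}

lemma le_seven_of_mem_densitySet (hF : F ∈ densitySet) (x : Icc (0 : ℝ) 1) : F x ≤ 7 := by
  obtain ⟨-, hlip, hint⟩ := hF
  have hle (y : ℝ) (hy : y ∈ Icc (0 : ℝ) 1) : F x ≤ IccExtend zero_le_one F y + 6 := by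
    rw [IccExtend_of_mem _ _ hy]
    have h1 := hlip.dist_le_mul x ⟨y, hy⟩
    have h2 : dist x ⟨y, hy⟩ ≤ 1 := Real.dist_le_of_mem_Icc_01 x.2 hy
    rw [Real.dist_eq] at h1
    push_cast at h1
    linarith [le_abs_self (F x - F ⟨y, hy⟩)]
  have := intervalIntegral.integral_mono_on (μ := volume) (f := fun _ => F x)
    (g := fun y => IccExtend zero_le_one F y + 6) zero_le_one intervalIntegrable_const
    ((F.continuous.Icc_extend'.add continuous_const).intervalIntegrable 0 1) hle
  rw [intervalIntegral.integral_add (F.continuous.Icc_extend'.intervalIntegrable 0 1)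
    intervalIntegrable_const, hint] at this
  simp only [intervalIntegral.integral_const, sub_zero, one_smul] at this
  linarith

lemma isClosed_densitySet : IsClosed densitySet := by
  have hnonneg : IsClosed {F : Icc (0 : ℝ) 1 →ᵇ ℝ | ∀ x, 0 ≤ F x} := by
    rw [ofPred_forall]
    exact isClosed_iInter fun x => isClosed_le continuous_const (continuous_eval_const x)
  have hlip : IsClosed {F : Icc (0 : ℝ) 1 →ᵇ ℝ | LipschitzWith 6 F} :=
    (isClosed_setOfPred_lipschitzWith (α := Icc (0 : ℝ) 1) (β := ℝ) 6).preimage continuous_coe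
  have hint :
      IsClosed {F : Icc (0 : ℝ) 1 →ᵇ ℝ | ∫ x in (0 : ℝ)..1, IccExtend zero_le_one F x = 1} :=
    isClosed_eq (intervalIntegral.continuous_parametric_intervalIntegral_of_continuous'
      (f := fun (F : Icc (0 : ℝ) 1 →ᵇ ℝ) t => IccExtend zero_le_one F t) (continuous_eval.comp
        (continuous_fst.prodMk
          ((continuous_projIcc (a := (0 : ℝ)) (b := 1) (h := zero_le_one)).comp continuous_snd)))
        0 1)
      continuous_const
  exact hnonneg.inter (hlip.inter hint)

lemma convex_densitySet : Convex ℝ densitySet := by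
  rintro F ⟨hF0, hFl, hFi⟩ G ⟨hG0, hGl, hGi⟩ a b ha hb hab
  refine ⟨fun x => ?_, convex_setOf_lipschitzWith 6 hFl hGl ha hb hab, ?_⟩
  · simp only [coe_add, coe_smul, Pi.add_apply, smul_eq_mul]
    have := hF0 x; have := hG0 x
    positivity
  · have hext (x : ℝ) : IccExtend zero_le_one (a • F + b • G) x
        = a * IccExtend zero_le_one F x + b * IccExtend zero_le_one G x := rfl
    simp only [hext]
    rw [intervalIntegral.integral_add
      ((F.continuous.Icc_extend'.intervalIntegrable 0 1).const_mul a)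
      ((G.continuous.Icc_extend'.intervalIntegrable 0 1).const_mul b),
      intervalIntegral.integral_const_mul, intervalIntegral.integral_const_mul, hFi, hGi]
    linarith

lemma isCompact_densitySet : IsCompact densitySet :=
  arzela_ascoli₂ (Icc 0 7) isCompact_Icc _ isClosed_densitySet
    (fun _ x hF => ⟨hF.1 x, le_seven_of_mem_densitySet hF x⟩)
    (LipschitzWith.uniformEquicontinuous _ 6 fun F => F.2.2.1).equicontinuous

lemma const_one_mem_densitySet : BoundedContinuousFunction.const (Icc (0 : ℝ) 1) 1 ∈ densitySet :=
  ⟨fun _ => zero_le_one, (LipschitzWith.const 1).weaken (by norm_num), by simp [IccExtend]⟩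

lemma mapsTo_transferCLM_densitySet : MapsTo transferCLM densitySet densitySet := by
  intro F hF
  have ⟨hF0, hFl, hFi⟩ := hF
  have hext0 (z : ℝ) : 0 ≤ IccExtend zero_le_one F z := hF0 _
  have hextl : LipschitzWith 6 (IccExtend zero_le_one F) := by
    have := hFl.comp (LipschitzWith.projIcc zero_le_one)
    rwa [mul_one] at this
  have hext7 (z : ℝ) : |IccExtend zero_le_one F z| ≤ 7 := by
    rw [abs_of_nonneg (hext0 z)]; exact le_seven_of_mem_densitySet hF _
  refine ⟨fun x => Lt_nonneg 0 hext0 x,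
    ((lipschitzOnWith_Lt_zero hextl hext7).mono Icc_subset_Ici_self).to_restrict, ?_⟩
  rw [intervalIntegral.integral_congr (g := Lt 0 (IccExtend zero_le_one F)) fun x hx => ?_,
    intervalIntegral_Lt_zero F.continuous.Icc_extend' hext0, hFi]
  rw [uIcc_of_le zero_le_one] at hx
  simp [IccExtend_of_mem _ _ hx, transferCLM_apply]

end FunctionSpace

theorem exists_invariant_density :
    ∃ h : ℝ → ℝ,
      ContinuousOn h (Set.Icc 0 1) ∧
      (∀ x ∈ Set.Icc (0 : ℝ) 1, 0 ≤ h x) ∧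
      (∫ x in Set.Icc (0 : ℝ) 1, h x) = 1 ∧
      (∀ x ∈ Set.Icc (0 : ℝ) 1, Lt 0 h x = h x) ∧
      (let μ : Measure ℝ :=
        (volume.restrict (Set.Ico (0 : ℝ) 1)).withDensity (fun x => ENNReal.ofReal (h x))
       IsProbabilityMeasure μ ∧
        (∀ A : Set ℝ, MeasurableSet A → μ (T ⁻¹' A) = μ A) ∧ μ ≪ volume) := by
  obtain ⟨G, ⟨hG0, -, hGint⟩, hGfix⟩ := transferCLM.exists_mem_fixedPt_of_mapsTo
    isCompact_densitySet convex_densitySet const_one_mem_densitySet mapsTo_transferCLM_densitySet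
  set h := IccExtend zero_le_one G
  have hcont : Continuous h := G.continuous.Icc_extend'
  have h0 (x : ℝ) : 0 ≤ h x := hG0 _
  have hfix (x : ℝ) (hx : x ∈ Icc (0 : ℝ) 1) : Lt 0 h x = h x :=
    calc Lt 0 h x = transferCLM G ⟨x, hx⟩ := rfl
      _ = h x := by rw [hGfix]; exact (IccExtend_of_mem _ _ hx).symm
  refine ⟨h, hcont.continuousOn, fun x _ => h0 x, ?_, hfix, ?_⟩
  · rw [integral_Icc_eq_integral_Ioc, ← intervalIntegral.integral_of_le zero_le_one, hGint]
  intro μ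
  have hμ (A : Set ℝ) (hA : MeasurableSet A) : μ A = ∫⁻ x in A ∩ Ico 0 1, ENNReal.ofReal (h x) := by
    rw [withDensity_apply _ hA, Measure.restrict_restrict hA]
  refine ⟨⟨?_⟩, fun A hA => ?_, ?_⟩
  · rw [hμ univ .univ, univ_inter, ← ofReal_intervalIntegral_zero_one hcont.integrableOn_Icc h0,
      hGint, ENNReal.ofReal_one]
  · rw [hμ _ (measurable_T hA), hμ A hA,
      setLIntegral_preimage_T_inter_Ico_eq_Lt_zero hA hcont.measurable h0]
    exact setLIntegral_congr_fun (hA.inter measurableSet_Ico) fun y hy => by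
      rw [hfix y (Ico_subset_Icc_self hy.2)]
  · exact (withDensity_absolutelyContinuous _ _).trans
      (Measure.absolutelyContinuous_of_le Measure.restrict_le_self)
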